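/- Let X, Y, A, G, N be as follows: X and Y are disjoint finite sets, A is an X×Y matrix over GF(2), G is the simple bipartite graph on X ∪ Y with x ∈ X adjacent to y ∈ Y iff A_{xy} = 1, and N is the binary matroid on X ∪ Y represented by assigning to x ∈ X the standard basis column e_x ∈ GF(2)^X and to y ∈ Y the column A_{·y}. If the matroid N is representable over every field, then for every field F, the isotropic 2-matroid Z₂(G) is strictly representable over F. -/

import Mathlib

open Matrix

noncomputable section

/-- The rank over `F` of the set of columns of `M` indexed by `S`. -/
def colSpanRank (F : Type*) [Field F] {m n : Type*} (M : Matrix m n F) (S : Set n) : ℕ :=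
  Module.finrank F ↥(Submodule.span F ((fun j i => M i j) '' S))

/-- A subtransversal of `W₂(G) = V × {φ,χ}`: at most one element of each pair. -/
def Subtransversal2 {V : Type*} (S : Set (V × Fin 2)) : Prop :=
  ∀ v i j, (v, i) ∈ S → (v, j) ∈ S → i = j

/-- The matrix `IA(G) = (I | A)` over GF(2); the columns `(v,0)` and `(v,1)` are
`φ_G(v)` and `χ_G(v)` respectively. -/
def IAmat {V : Type*} [DecidableEq V] (A : Matrix V V (ZMod 2)) :
    Matrix V (V × Fin 2) (ZMod 2) :=
  Matrix.of fun v p => if p.2 = 0 then (if v = p.1 then 1 else 0) else A v p.1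

/-- `Z₂(G)` is strictly representable over `F`: the sheltering matroid has rank `|V(G)|`. -/
def Z2RepStrict (F : Type*) [Field F] {V : Type*} [Fintype V] [DecidableEq V]
    (A : Matrix V V (ZMod 2)) : Prop :=
  ∃ (k : ℕ) (P : Matrix (Fin k) (V × Fin 2) F),
    P.rank = Fintype.card V ∧
    ∀ S : Set (V × Fin 2), Subtransversal2 S →
      colSpanRank F P S = colSpanRank (ZMod 2) (IAmat A) S

/-- The adjacency matrix of the bipartite graph on `X ⊕ Y` determined by the
GF(2)-matrix `A`. -/
def bipAdj {X Y : Type*} (A : Matrix X Y (ZMod 2)) :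
    Matrix (X ⊕ Y) (X ⊕ Y) (ZMod 2) :=
  Matrix.of fun a b =>
    match a, b with
    | Sum.inl x, Sum.inr y => A x y
    | Sum.inr y, Sum.inl x => A x y
    | _, _ => 0

/-- The representation `(I | A)` of the binary matroid `N` on `X ⊕ Y`. -/
def Nmat {X Y : Type*} [DecidableEq X] (A : Matrix X Y (ZMod 2)) :
    Matrix X (X ⊕ Y) (ZMod 2) :=
  Matrix.of fun i c =>
    match c with
    | Sum.inl x => if i = x then 1 else 0
    | Sum.inr y => A i y

/-!
For a bipartite graph the columns of `IA(G)` split into two blocks with disjoint row supports: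
`φ(x), χ(y)` live on the rows in `X` and form `(I | A)`, while `φ(y), χ(x)` live on the rows in
`Y` and form `(I | Aᵀ)`. Ranks in `IA(G)` are therefore sums of ranks for `(I | A)` and `(I | Aᵀ)`.

A representation of `N` over `F` can be normalized to `(I | B)`. The rank of a column set `S` of
`(I | B)` is `|S ∩ X|` plus the rank of the submatrix of `B` with rows `X \ S` and columns
`S ∩ Y`, so `(I | B)` and `(I | A)` have equal rank functions iff corresponding submatrices of `B`
and `A` have equal ranks. This condition is invariant under transposition, so `(I | Bᵀ)` matches
`(I | Aᵀ)` as well, and the matrix with diagonal blocks `(I | B)`, `(I | Bᵀ)` represents `Z₂(G)`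
with rank `|X| + |Y|`.
-/

section ColSpanRank

open Submodule Module

variable {K : Type*} [Field K] {m m' n n' : Type*}

theorem colSpanRank_eq_of_injective (M : Matrix m n K) (M' : Matrix m' n K)
    {L : (m → K) →ₗ[K] m' → K} (hL : Function.Injective L)
    (h : ∀ j, (fun i => M' i j) = L fun i => M i j) (S : Set n) :
    colSpanRank K M' S = colSpanRank K M S := by
  have himage : (fun j i => M' i j) '' S = L '' ((fun j i => M i j) '' S) := by
    rw [Set.image_image]
    exact Set.image_congr fun j _ => h j
  rw [colSpanRank, himage, ← map_span]
  exact (equivMapOfInjective L hL _).finrank_eq.symm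

theorem colSpanRank_submatrix_equiv_id (M : Matrix m n K) (e : m' ≃ m) (S : Set n) :
    colSpanRank K (M.submatrix e id) S = colSpanRank K M S :=
  colSpanRank_eq_of_injective M _ (LinearEquiv.funCongrLeft K K e).injective (fun _ => rfl) S

theorem colSpanRank_submatrix_id (M : Matrix m n K) (f : n' → n) (S : Set n') :
    colSpanRank K (M.submatrix id f) S = colSpanRank K M (f '' S) := by
  rw [colSpanRank, colSpanRank, Set.image_image]
  rfl

theorem colSpanRank_of_isEmpty [IsEmpty m] (M : Matrix m n K) (S : Set n) :
    colSpanRank K M S = 0 :=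
  finrank_zero_of_subsingleton

theorem colSpanRank_empty (M : Matrix m n K) : colSpanRank K M ∅ = 0 := by
  rw [colSpanRank, Set.image_empty, span_empty, finrank_bot]

theorem colSpanRank_eq_rank_submatrix (M : Matrix m n K) (S : Set n) [Fintype S] :
    colSpanRank K M S = (M.submatrix id ((↑) : S → n)).rank := by
  rw [rank_eq_finrank_span_cols, colSpanRank, Set.image_eq_range]
  rfl

theorem rank_eq_colSpanRank_univ [Fintype n] (M : Matrix m n K) :
    M.rank = colSpanRank K M Set.univ := by
  rw [rank_eq_finrank_span_cols, colSpanRank, Set.image_univ]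
  rfl

theorem colSpanRank_submatrix_transpose [Finite m] [Finite n] (M : Matrix m n K)
    (s : Set m) (t : Set n) :
    colSpanRank K (Mᵀ.submatrix ((↑) : t → n) id) s =
      colSpanRank K (M.submatrix ((↑) : s → m) id) t := by
  classical
  have := Fintype.ofFinite m
  have := Fintype.ofFinite n
  rw [colSpanRank_eq_rank_submatrix, colSpanRank_eq_rank_submatrix, submatrix_submatrix,
    submatrix_submatrix, ← rank_transpose, transpose_submatrix]
  rfl

theorem finrank_map_add_finrank_ker_of_ker_le {V V' : Type*} [AddCommGroup V] [Module K V]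
    [AddCommGroup V'] [Module K V'] (f : V →ₗ[K] V') {W : Submodule K V}
    [FiniteDimensional K W] (h : LinearMap.ker f ≤ W) :
    finrank K (W.map f) + finrank K (LinearMap.ker f) = finrank K W := by
  rw [← LinearMap.range_domRestrict, ← (comapSubtypeEquivOfLe h).finrank_eq,
    ← LinearMap.ker_domRestrict]
  exact LinearMap.finrank_range_add_finrank_ker _

theorem finrank_ker_funLeft_compl {X : Type*} [Fintype X] (s : Set X) :
    finrank K (LinearMap.ker (LinearMap.funLeft K K ((↑) : ↥sᶜ → X))) = s.ncard := by
  classical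
  have hsurj : Function.Surjective (LinearMap.funLeft K K ((↑) : ↥sᶜ → X)) :=
    LinearMap.funLeft_surjective_of_injective K K _ Subtype.val_injective
  have := LinearMap.finrank_range_add_finrank_ker (LinearMap.funLeft K K ((↑) : ↥sᶜ → X))
  rw [LinearMap.range_eq_top.mpr hsurj, finrank_top, finrank_fintype_fun_eq_card,
    finrank_fintype_fun_eq_card, ← Nat.card_eq_fintype_card, ← Nat.card_eq_fintype_card,
    Nat.card_coe_set_eq] at this
  have := Set.ncard_add_ncard_compl s
  omega

end ColSpanRank

section FromColsOne

open Submodule Module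

variable {K : Type*} [Field K] {X Y : Type*} [Fintype X] [DecidableEq X]

theorem colSpanRank_fromCols_one (M : Matrix X Y K) (S : Set (X ⊕ Y)) :
    colSpanRank K (fromCols 1 M) S = (Sum.inl ⁻¹' S).ncard +
      colSpanRank K (M.submatrix ((↑) : ↥(Sum.inl ⁻¹' S)ᶜ → X) id) (Sum.inr ⁻¹' S) := by
  classical
  set a : Set X := Sum.inl ⁻¹' S
  set W := span K ((fun j i => fromCols 1 M i j) '' S)
  -- the kernel of the restriction to the rows outside `a` is spanned by the unit columns in `S`
  let π : (X → K) →ₗ[K] ↥aᶜ → K := LinearMap.funLeft K K (↑)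
  have hker : LinearMap.ker π ≤ W := by
    intro f hf
    have hvanish : ∀ x ∉ a, f x = 0 := fun x hx => congr_fun hf ⟨x, hx⟩
    rw [pi_eq_sum_univ f]
    refine sum_mem fun x _ => ?_
    by_cases hx : x ∈ a
    · refine smul_mem _ _ (subset_span ⟨Sum.inl x, hx, ?_⟩)
      funext i
      simp [one_apply, eq_comm]
    · simp [hvanish x hx]
  have hmap : W.map π =
      span K ((fun j i => M.submatrix ((↑) : ↥aᶜ → X) id i j) '' (Sum.inr ⁻¹' S)) := by
    rw [map_span]
    apply le_antisymm
    · rw [span_le]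
      rintro _ ⟨_, ⟨x | y, hc, rfl⟩, rfl⟩
      · have : π (fun i => fromCols 1 M i (Sum.inl x)) = 0 := by
          funext i
          have hne : (i : X) ≠ x := fun h => i.2 (h ▸ hc)
          simp [π, one_apply, hne]
        rw [this]
        exact zero_mem _
      · exact subset_span ⟨y, hc, rfl⟩
    · rw [span_le]
      rintro _ ⟨y, hy, rfl⟩
      exact subset_span ⟨_, ⟨Sum.inr y, hy, rfl⟩, rfl⟩
  rw [colSpanRank, colSpanRank, ← finrank_map_add_finrank_ker_of_ker_le π hker, hmap,
    finrank_ker_funLeft_compl, add_comm]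

end FromColsOne

section Transfer

variable {K K' : Type*} [Field K] [Field K'] {X Y : Type*} [Fintype X] [DecidableEq X]

theorem colSpanRank_fromCols_one_univ (M : Matrix X Y K) :
    colSpanRank K (fromCols 1 M) (Set.univ : Set (X ⊕ Y)) = Fintype.card X := by
  rw [colSpanRank_fromCols_one, Set.preimage_univ, Set.compl_univ, colSpanRank_of_isEmpty,
    Set.ncard_univ, Nat.card_eq_fintype_card, add_zero]

theorem colSpanRank_fromCols_one_range_inl (M : Matrix X Y K) :
    colSpanRank K (fromCols 1 M) (Set.range (Sum.inl : X → X ⊕ Y)) = Fintype.card X := by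
  rw [colSpanRank_fromCols_one, Set.preimage_range, Set.preimage_inr_range_inl,
    colSpanRank_empty, Set.ncard_univ, Nat.card_eq_fintype_card, add_zero]

theorem colSpanRank_submatrix_eq_of_fromCols_one (M : Matrix X Y K) (M' : Matrix X Y K')
    (h : ∀ S : Set (X ⊕ Y), colSpanRank K (fromCols 1 M) S = colSpanRank K' (fromCols 1 M') S)
    (s : Set X) (t : Set Y) :
    colSpanRank K (M.submatrix ((↑) : s → X) id) t =
      colSpanRank K' (M'.submatrix ((↑) : s → X) id) t := by
  have hinl : Sum.inl ⁻¹' (Sum.inl '' sᶜ ∪ Sum.inr '' t) = sᶜ := by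
    simp [Sum.inl_injective.preimage_image]
  have hinr : Sum.inr ⁻¹' (Sum.inl '' sᶜ ∪ Sum.inr '' t) = t := by
    simp [Sum.inr_injective.preimage_image]
  have hS := h (Sum.inl '' sᶜ ∪ Sum.inr '' t)
  rw [colSpanRank_fromCols_one, colSpanRank_fromCols_one, hinl, hinr, compl_compl] at hS
  exact Nat.add_left_cancel hS

theorem colSpanRank_fromCols_one_transpose_eq [Fintype Y] [DecidableEq Y]
    (M : Matrix X Y K) (M' : Matrix X Y K')
    (h : ∀ S : Set (X ⊕ Y), colSpanRank K (fromCols 1 M) S = colSpanRank K' (fromCols 1 M') S)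
    (T : Set (Y ⊕ X)) :
    colSpanRank K (fromCols 1 Mᵀ) T = colSpanRank K' (fromCols 1 M'ᵀ) T := by
  rw [colSpanRank_fromCols_one, colSpanRank_fromCols_one, colSpanRank_submatrix_transpose,
    colSpanRank_submatrix_transpose, colSpanRank_submatrix_eq_of_fromCols_one M M' h]

end Transfer

section StandardForm

open Submodule Module

variable {F K : Type*} [Field F] [Field K]

theorem colSpanRank_mul_of_injective {m m' n : Type*} [Fintype m] (T : Matrix m' m F)
    (hT : Function.Injective T.mulVecLin) (M : Matrix m n F) (S : Set n) :
    colSpanRank F (T * M) S = colSpanRank F M S :=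
  colSpanRank_eq_of_injective M (T * M) hT (fun _ => rfl) S

theorem mulVecLin_injective_of_rank_eq {m X : Type*} [Fintype X] (T : Matrix m X F)
    (hT : T.rank = Fintype.card X) : Function.Injective T.mulVecLin := by
  have := LinearMap.finrank_range_add_finrank_ker T.mulVecLin
  rw [← Matrix.rank, hT, finrank_fintype_fun_eq_card, add_eq_left] at this
  exact LinearMap.ker_eq_bot.mp (Submodule.finrank_eq_zero.mp this)

theorem exists_fromCols_one_of_colSpanRank_eq {m X Y : Type*} [Fintype m] [Fintype X]
    [DecidableEq X] (Q : Matrix m (X ⊕ Y) F) (A : Matrix X Y K)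
    (hQ : ∀ S, colSpanRank F Q S = colSpanRank K (fromCols 1 A) S) :
    ∃ B : Matrix X Y F, ∀ S : Set (X ⊕ Y),
      colSpanRank F (fromCols 1 B) S = colSpanRank K (fromCols 1 A) S := by
  -- the columns of `Q` indexed by `X` form a basis of its column space
  set Qi := Q.submatrix id Sum.inl
  have hQi : Qi.rank = Fintype.card X := by
    rw [rank_eq_colSpanRank_univ, colSpanRank_submatrix_id, Set.image_univ, hQ,
      colSpanRank_fromCols_one_range_inl]
  have hrange : LinearMap.range Qi.mulVecLin = span F ((fun j i => Q i j) '' Set.univ) := by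
    refine eq_of_le_of_finrank_le ?_ ?_
    · rw [range_mulVecLin]
      exact span_mono (Set.range_subset_iff.mpr fun x => ⟨Sum.inl x, trivial, rfl⟩)
    · change colSpanRank F Q Set.univ ≤ Qi.rank
      rw [hQ, colSpanRank_fromCols_one_univ, hQi]
  have hcol : ∀ y, (fun i => Q i (Sum.inr y)) ∈ LinearMap.range Qi.mulVecLin := fun y =>
    hrange ▸ subset_span ⟨Sum.inr y, trivial, rfl⟩
  choose b hb using hcol
  refine ⟨(of b)ᵀ, fun S => ?_⟩
  have hQ_eq : Q = Qi * fromCols 1 (of b)ᵀ := by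
    ext i (x | y)
    · simp [Qi]
    · exact (congr_fun (hb y) i).symm
  rw [← hQ, hQ_eq, colSpanRank_mul_of_injective _ (mulVecLin_injective_of_rank_eq Qi hQi)]

end StandardForm

section Blocks

open Submodule Module

variable {K : Type*} [Field K]

theorem colSpanRank_union_of_disjoint {m n : Type*} [Finite m] (M : Matrix m n K) {S T : Set n}
    (h : Disjoint (span K ((fun j i => M i j) '' S)) (span K ((fun j i => M i j) '' T))) :
    colSpanRank K M (S ∪ T) = colSpanRank K M S + colSpanRank K M T := by
  have := finrank_sup_add_finrank_inf_eq (span K ((fun j i => M i j) '' S))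
    (span K ((fun j i => M i j) '' T))
  rw [h.eq_bot, finrank_bot, add_zero, ← span_union, ← Set.image_union] at this
  exact this

theorem colSpanRank_fromBlocks_zero {m₁ m₂ n₁ n₂ : Type*} [Finite m₁] [Finite m₂]
    (M₁ : Matrix m₁ n₁ K)
    (M₂ : Matrix m₂ n₂ K) (S : Set (n₁ ⊕ n₂)) :
    colSpanRank K (fromBlocks M₁ 0 0 M₂) S =
      colSpanRank K M₁ (Sum.inl ⁻¹' S) + colSpanRank K M₂ (Sum.inr ⁻¹' S) := by
  set M := fromBlocks M₁ 0 0 M₂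
  let Φ := (LinearEquiv.sumArrowLequivProdArrow m₁ m₂ K K).symm
  have h₁ : colSpanRank K M (Sum.inl '' (Sum.inl ⁻¹' S)) = colSpanRank K M₁ (Sum.inl ⁻¹' S) := by
    rw [← colSpanRank_submatrix_id]
    refine colSpanRank_eq_of_injective _ _ (L := Φ.toLinearMap ∘ₗ LinearMap.inl K _ _)
      (by exact Φ.injective.comp LinearMap.inl_injective) (fun j => ?_) _
    funext i
    rcases i with i | i <;> rfl
  have h₂ : colSpanRank K M (Sum.inr '' (Sum.inr ⁻¹' S)) = colSpanRank K M₂ (Sum.inr ⁻¹' S) := by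
    rw [← colSpanRank_submatrix_id]
    refine colSpanRank_eq_of_injective _ _ (L := Φ.toLinearMap ∘ₗ LinearMap.inr K _ _)
      (by exact Φ.injective.comp LinearMap.inr_injective) (fun j => ?_) _
    funext i
    rcases i with i | i <;> rfl
  have hdisj : Disjoint (span K ((fun j i => M i j) '' (Sum.inl '' (Sum.inl ⁻¹' S))))
      (span K ((fun j i => M i j) '' (Sum.inr '' (Sum.inr ⁻¹' S)))) := by
    have hker : Disjoint (LinearMap.ker (LinearMap.funLeft K K (Sum.inr : m₂ → m₁ ⊕ m₂)))
        (LinearMap.ker (LinearMap.funLeft K K (Sum.inl : m₁ → m₁ ⊕ m₂))) := by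
      rw [disjoint_def]
      intro v h₂ h₁
      funext i
      rcases i with i | i
      exacts [congr_fun h₁ i, congr_fun h₂ i]
    refine hker.mono ?_ ?_ <;> rw [span_le] <;> rintro _ ⟨_, ⟨j, -, rfl⟩, rfl⟩ <;> rfl
  rw [← h₁, ← h₂, ← colSpanRank_union_of_disjoint M hdisj,
    Set.image_preimage_inl_union_image_preimage_inr]

end Blocks

section Bipartite

variable {X Y : Type*}

/-- `φ(x)` and `χ(y)` are supported on the rows in `X`, where they form `(I | A)`;
`φ(y)` and `χ(x)` are supported on the rows in `Y`, where they form `(I | Aᵀ)`. -/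
def bipartiteColIndex : (X ⊕ Y) × Fin 2 → (X ⊕ Y) ⊕ (Y ⊕ X) := fun p =>
  if p.2 = 0 then p.1.elim (Sum.inl ∘ Sum.inl) (Sum.inr ∘ Sum.inl)
  else p.1.elim (Sum.inr ∘ Sum.inr) (Sum.inl ∘ Sum.inr)

theorem bipartiteColIndex_surjective :
    Function.Surjective (bipartiteColIndex : (X ⊕ Y) × Fin 2 → _) := by
  rintro ((x | y) | (y | x))
  exacts [⟨(Sum.inl x, 0), rfl⟩, ⟨(Sum.inr y, 1), rfl⟩, ⟨(Sum.inr y, 0), rfl⟩,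
    ⟨(Sum.inl x, 1), rfl⟩]

variable [DecidableEq X] [DecidableEq Y]

def bipartiteIA {R : Type*} [Zero R] [One R] (M : Matrix X Y R) :
    Matrix (X ⊕ Y) ((X ⊕ Y) × Fin 2) R :=
  (fromBlocks (fromCols 1 M) 0 0 (fromCols 1 Mᵀ)).submatrix id bipartiteColIndex

theorem IAmat_bipAdj (A : Matrix X Y (ZMod 2)) : IAmat (bipAdj A) = bipartiteIA A := by
  ext (x | y) ⟨x' | y', i⟩ <;> fin_cases i <;>
    simp [IAmat, bipAdj, bipartiteIA, bipartiteColIndex, one_apply]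

variable {K : Type*} [Field K] [Fintype X] [Fintype Y]

theorem colSpanRank_bipartiteIA (M : Matrix X Y K) (S : Set ((X ⊕ Y) × Fin 2)) :
    colSpanRank K (bipartiteIA M) S =
      colSpanRank K (fromCols 1 M) (Sum.inl ⁻¹' (bipartiteColIndex '' S)) +
        colSpanRank K (fromCols 1 Mᵀ) (Sum.inr ⁻¹' (bipartiteColIndex '' S)) := by
  rw [bipartiteIA, colSpanRank_submatrix_id, colSpanRank_fromBlocks_zero]

theorem colSpanRank_bipartiteIA_univ (M : Matrix X Y K) :
    colSpanRank K (bipartiteIA M) Set.univ = Fintype.card (X ⊕ Y) := by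
  rw [colSpanRank_bipartiteIA, Set.image_univ_of_surjective bipartiteColIndex_surjective,
    Set.preimage_univ, Set.preimage_univ, colSpanRank_fromCols_one_univ,
    colSpanRank_fromCols_one_univ, Fintype.card_sum]

end Bipartite

theorem Nmat_eq_fromCols_one {X Y : Type*} [DecidableEq X] (A : Matrix X Y (ZMod 2)) :
    Nmat A = fromCols 1 A := by
  ext i (x | y)
  · simp [Nmat, one_apply]
  · rfl

/-- If the binary matroid `N` (represented over GF(2) by `Nmat A`) is representable
over every field, then `Z₂(G)` is strictly representable over every field, where `G`
is the bipartite graph with fundamental matrix `A`. -/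
theorem Z2_bipartite_strictly_representable
    {X Y : Type} [Fintype X] [DecidableEq X] [Fintype Y] [DecidableEq Y]
    (A : Matrix X Y (ZMod 2))
    (hN : ∀ (F : Type) [Field F], ∃ (k : ℕ) (P : Matrix (Fin k) (X ⊕ Y) F),
      ∀ S : Set (X ⊕ Y), colSpanRank F P S = colSpanRank (ZMod 2) (Nmat A) S) :
    ∀ (F : Type) [Field F], Z2RepStrict F (bipAdj A) := by
  intro F _
  obtain ⟨_, Q, hQ⟩ := hN F
  rw [Nmat_eq_fromCols_one] at hQ
  obtain ⟨B, hB⟩ := exists_fromCols_one_of_colSpanRank_eq Q A hQ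
  have hBT := colSpanRank_fromCols_one_transpose_eq B A hB
  let P := (bipartiteIA B).submatrix (Fintype.equivFin (X ⊕ Y)).symm id
  refine ⟨_, P, ?_, fun S _ => ?_⟩
  · rw [rank_eq_colSpanRank_univ, colSpanRank_submatrix_equiv_id, colSpanRank_bipartiteIA_univ]
  · rw [colSpanRank_submatrix_equiv_id, IAmat_bipAdj, colSpanRank_bipartiteIA,
      colSpanRank_bipartiteIA, hB, hBT]
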